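/- arXiv:0705.2071 — 4 statements merged into one kernel-verified Lean document; each statement's English description precedes it below -/
import Mathlib

section
/- Let λ = Σ_{i=1}^{n} λ_i Λ_i be a dominant integral weight of sl_{n+1} and for 1 ≤ i ≤ j ≤ n define ω_{i,j} := (s_i s_{i+1} ⋯ s_j)(s_1 s_2 ⋯ s_{j-1})(s_1 s_2 ⋯ s_{j-2}) ⋯ (s_1 s_2) s_1 in the Weyl group. Then for i ≠ 1, ⟨ω_{i,j} λ, α_{i-1}^∨⟩ = λ_{j-i+2} + λ_{j-i+3} + ⋯ + λ_j. -/
/-- The type `A` Cartan matrix entry `𝔞_{i,j}` (1-indexed). -/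
def carA (i j : ℕ) : ℤ := if i = j then 2 else if i = j + 1 ∨ j = i + 1 then -1 else 0

/-- The simple reflection `s_i` acting on a weight, written in the coordinates
`v j = ⟨v, α_j^∨⟩`: `(s_i v) j = v j - ⟨v, α_i^∨⟩ · ⟨α_i, α_j^∨⟩`. -/
def srefl (i : ℕ) (v : ℕ → ℤ) : ℕ → ℤ := fun j => v j - v i * carA j i

/-- The list `[a, a+1, …, b]`. -/
def seg (a b : ℕ) : List ℕ := List.range' a (b + 1 - a)

/-- The word `ω_{i,j} = (s_i s_{i+1} ⋯ s_j)(s_1 ⋯ s_{j-1})(s_1 ⋯ s_{j-2}) ⋯ (s_1 s_2) s_1`. -/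
def weylWord (i j : ℕ) : List ℕ :=
  seg i j ++ (((List.range (j - 1)).reverse.map (fun m => seg 1 (m + 1))).flatten)

/-- Applying the word `w = s_{i_1} ⋯ s_{i_k}` to a weight `v`. -/
def applyWord (w : List ℕ) (v : ℕ → ℤ) : ℕ → ℤ := w.foldr srefl v

/-!
Write a weight `v` in coordinates `x` with `v c = x c - x (c + 1)` (the `ε`-coordinates of
`sl_{n+1}`). Then `s_c` just swaps `x c` and `x (c + 1)`, so a word in the simple reflections
acts by permuting the coordinates of `x`. For `ω_{i,j}` this permutation is explicit: `s_i ⋯ s_j`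
is the cycle `i ↦ j + 1 ↦ j ↦ ⋯ ↦ i`, and the remaining factor is the longest element of the
symmetric group on `{1, …, j}`, which reverses that interval. A weight `λ` has the coordinates
`x c = -(λ_0 + ⋯ + λ_{c-1})`, and `⟨ω_{i,j} λ, α_{i-1}^∨⟩ = x (j - i + 2) - x (j + 1)` is the
claimed partial sum.
-/

open Finset

def epsWeight (x : ℕ → ℤ) : ℕ → ℤ := fun c => x c - x (c + 1)

def wordPerm (w : List ℕ) : ℕ → ℕ := w.foldr (fun i f => f ∘ Equiv.swap i (i + 1)) id

lemma wordPerm_cons (i : ℕ) (w : List ℕ) :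
    wordPerm (i :: w) = wordPerm w ∘ Equiv.swap i (i + 1) := rfl

lemma wordPerm_append (w₁ w₂ : List ℕ) :
    wordPerm (w₁ ++ w₂) = wordPerm w₂ ∘ wordPerm w₁ := by
  induction w₁ with
  | nil => rfl
  | cons i w ih => simp only [List.cons_append, wordPerm_cons, ih, Function.comp_assoc]

lemma srefl_epsWeight (i : ℕ) (x : ℕ → ℤ) :
    srefl i (epsWeight x) = epsWeight (x ∘ Equiv.swap i (i + 1)) := by
  funext c
  simp only [srefl, epsWeight, carA, Function.comp_apply, Equiv.swap_apply_def]
  split_ifs <;> subst_vars <;> omega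

lemma applyWord_epsWeight (w : List ℕ) (x : ℕ → ℤ) :
    applyWord w (epsWeight x) = epsWeight (x ∘ wordPerm w) := by
  induction w with
  | nil => rfl
  | cons i w ih =>
    change srefl i (applyWord w (epsWeight x)) = _
    rw [ih, srefl_epsWeight, wordPerm_cons, Function.comp_assoc]

lemma epsWeight_neg_sum_range (v : ℕ → ℤ) :
    epsWeight (fun c => -∑ k ∈ range c, v k) = v := by
  funext c
  simp only [epsWeight, sum_range_succ]
  ring

lemma wordPerm_range' (n a c : ℕ) :
    wordPerm (List.range' a n) c =
      if c = a ∧ n ≠ 0 then a + n else if a < c ∧ c ≤ a + n then c - 1 else c := by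
  induction n generalizing a c with
  | zero => change c = _; split_ifs <;> omega
  | succ n ih =>
    simp only [List.range'_succ, wordPerm_cons, Function.comp_apply, ih, Equiv.swap_apply_def]
    split_ifs <;> omega

lemma wordPerm_seg (a b c : ℕ) :
    wordPerm (seg a b) c =
      if c = a ∧ a ≤ b then b + 1 else if a < c ∧ c ≤ b + 1 then c - 1 else c := by
  rw [seg, wordPerm_range']
  split_ifs <;> omega

def longestWord (t : ℕ) : List ℕ :=
  ((List.range t).reverse.map (fun m => seg 1 (m + 1))).flatten

lemma weylWord_eq (i j : ℕ) : weylWord i j = seg i j ++ longestWord (j - 1) := rfl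

lemma longestWord_succ (t : ℕ) : longestWord (t + 1) = seg 1 (t + 1) ++ longestWord t := by
  simp [longestWord, List.range_succ]

lemma wordPerm_longestWord (t c : ℕ) :
    wordPerm (longestWord t) c = if 1 ≤ c ∧ c ≤ t + 1 then t + 2 - c else c := by
  induction t generalizing c with
  | zero => change c = _; split_ifs <;> omega
  | succ t ih =>
    rw [longestWord_succ, wordPerm_append, Function.comp_apply, wordPerm_seg, ih]
    split_ifs <;> omega

lemma wordPerm_weylWord_pred {i j : ℕ} (hi : 2 ≤ i) (hij : i ≤ j) :
    wordPerm (weylWord i j) (i - 1) = j - i + 2 := by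
  rw [weylWord_eq, wordPerm_append, Function.comp_apply, wordPerm_seg, wordPerm_longestWord]
  split_ifs <;> omega

lemma wordPerm_weylWord_self {i j : ℕ} (hij : i ≤ j) :
    wordPerm (weylWord i j) i = j + 1 := by
  rw [weylWord_eq, wordPerm_append, Function.comp_apply, wordPerm_seg, wordPerm_longestWord]
  split_ifs <;> omega

theorem stmt2_general (lam : ℕ → ℤ)
    (i j : ℕ) (h2 : 2 ≤ i) (hij : i ≤ j) :
    applyWord (weylWord i j) lam (i - 1) = ∑ k ∈ Finset.Icc (j - i + 2) j, lam k := by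
  calc applyWord (weylWord i j) lam (i - 1)
      = epsWeight ((fun c => -∑ k ∈ range c, lam k) ∘ wordPerm (weylWord i j)) (i - 1) := by
        rw [← applyWord_epsWeight, epsWeight_neg_sum_range]
    _ = ∑ k ∈ range (j + 1), lam k - ∑ k ∈ range (j - i + 2), lam k := by
        simp only [epsWeight, Function.comp_apply, Nat.sub_add_cancel (by omega : 1 ≤ i),
          wordPerm_weylWord_pred h2 hij, wordPerm_weylWord_self hij]
        ring
    _ = ∑ k ∈ Icc (j - i + 2) j, lam k := by
        rw [← Ico_add_one_right_eq_Icc, sum_Ico_eq_sub _ (by omega)]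

/-- For a dominant integral weight `λ = Σ λ_i Λ_i` of `sl_{n+1}` and `2 ≤ i ≤ j ≤ n`:
`⟨ω_{i,j} λ, α_{i-1}^∨⟩ = λ_{j-i+2} + λ_{j-i+3} + ⋯ + λ_j`. -/
theorem stmt2 (n : ℕ) (lam : ℕ → ℤ) (hdom : ∀ k, 0 ≤ lam k)
    (i j : ℕ) (h2 : 2 ≤ i) (hij : i ≤ j) (hj : j ≤ n) :
    applyWord (weylWord i j) lam (i - 1) = ∑ k ∈ Finset.Icc (j - i + 2) j, lam k :=
  stmt2_general lam i j h2 hij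
end

section
/- Let λ = Σ_{i=1}^{n} λ_i Λ_i be a dominant integral weight of sl_{n+1} and for 1 ≤ j ≤ n define ω_{1,j} := (s_1 s_2 ⋯ s_j)(s_1 s_2 ⋯ s_{j-1}) ⋯ (s_1 s_2) s_1 in the Weyl group. Then for j ≤ n-1, ⟨ω_{1,j} λ, α_{j+1}^∨⟩ = λ_1 + λ_2 + ⋯ + λ_{j+1}. -/
/-!
In ε-coordinates, where `⟨Σ x_k ε_k, α_k^∨⟩ = x_k - x_{k+1}`, the simple reflection `s_i` just
transposes `x_i` and `x_{i+1}`. Then `s_1 s_2 ⋯ s_j` is a cyclic shift and `ω_{1,j}` reverses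
`x_1, …, x_{j+1}`, so `⟨ω_{1,j} λ, α_{j+1}^∨⟩ = x_1 - x_{j+2}`; with `x_k = -(λ_0 + ⋯ + λ_{k-1})`
this is `λ_1 + ⋯ + λ_{j+1}`.
-/

def fundCoords (x : ℕ → ℤ) (k : ℕ) : ℤ := x k - x (k + 1)

def swapAdj (i : ℕ) (x : ℕ → ℤ) : ℕ → ℤ := x ∘ Equiv.swap i (i + 1)

def epsOfFund (lam : ℕ → ℤ) (k : ℕ) : ℤ := -∑ i ∈ Finset.range k, lam i

theorem srefl_fundCoords (i : ℕ) (x : ℕ → ℤ) :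
    srefl i (fundCoords x) = fundCoords (swapAdj i x) := by
  funext k
  simp only [srefl, fundCoords, swapAdj, Function.comp_apply, carA, Equiv.swap_apply_def]
  split_ifs <;> grind

theorem applyWord_fundCoords (w : List ℕ) (x : ℕ → ℤ) :
    applyWord w (fundCoords x) = fundCoords (w.foldr swapAdj x) := by
  induction w with
  | nil => rfl
  | cons i w ih =>
    rw [applyWord, List.foldr_cons, ← applyWord, ih, srefl_fundCoords, List.foldr_cons]

theorem fundCoords_epsOfFund (lam : ℕ → ℤ) : fundCoords (epsOfFund lam) = lam := by
  funext k
  simp only [fundCoords, epsOfFund, Finset.sum_range_succ]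
  ring

theorem epsOfFund_sub (lam : ℕ → ℤ) {a b : ℕ} (hab : a ≤ b) :
    epsOfFund lam a - epsOfFund lam b = ∑ i ∈ Finset.Ico a b, lam i := by
  rw [epsOfFund, epsOfFund, Finset.sum_Ico_eq_sub _ hab]
  ring

theorem foldr_swapAdj_range' (y : ℕ → ℤ) (a d k : ℕ) :
    (List.range' a d).foldr swapAdj y k =
      y (if k = a then a + d else if a < k ∧ k ≤ a + d then k - 1 else k) := by
  induction d generalizing a k with
  | zero =>
    show y k = _
    congr 1
    split_ifs <;> omega
  | succ d ih =>
    rw [List.range'_succ, List.foldr_cons, swapAdj, Function.comp_apply, ih]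
    congr 1
    simp only [Equiv.swap_apply_def]
    split_ifs <;> omega

theorem weylWord_one_succ (j : ℕ) : weylWord 1 (j + 1) = seg 1 (j + 1) ++ weylWord 1 j := by
  rcases j with _ | j
  · rfl
  · simp only [weylWord, Nat.add_sub_cancel]
    rw [List.range_succ, List.reverse_append, List.map_append, List.flatten_append]
    simp [seg]

theorem foldr_swapAdj_weylWord (x : ℕ → ℤ) (j k : ℕ) :
    (weylWord 1 j).foldr swapAdj x k = x (if 1 ≤ k ∧ k ≤ j + 1 then j + 2 - k else k) := by
  induction j generalizing k with
  | zero =>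
    show x k = _
    congr 1
    split_ifs <;> omega
  | succ j ih =>
    rw [weylWord_one_succ, List.foldr_append, seg, foldr_swapAdj_range', ih]
    congr 1
    split_ifs <;> omega

theorem stmt3_general (lam : ℕ → ℤ) (j : ℕ) :
    applyWord (weylWord 1 j) lam (j + 1) = ∑ k ∈ Finset.Icc 1 (j + 1), lam k := by
  conv_lhs => rw [← fundCoords_epsOfFund lam, applyWord_fundCoords, fundCoords,
    foldr_swapAdj_weylWord, foldr_swapAdj_weylWord]
  rw [if_pos (by omega), if_neg (by omega), show j + 2 - (j + 1) = 1 by omega,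
    epsOfFund_sub lam (by omega), Finset.Ico_add_one_right_eq_Icc]

/-- For a dominant integral weight `λ = Σ λ_i Λ_i` of `sl_{n+1}` and `1 ≤ j ≤ n-1`:
`⟨ω_{1,j} λ, α_{j+1}^∨⟩ = λ_1 + λ_2 + ⋯ + λ_{j+1}`. -/
theorem stmt3 (n : ℕ) (lam : ℕ → ℤ) (hdom : ∀ k, 0 ≤ lam k)
    (j : ℕ) (hj1 : 1 ≤ j) (hjn : j ≤ n - 1) :
    applyWord (weylWord 1 j) lam (j + 1) = ∑ k ∈ Finset.Icc 1 (j + 1), lam k :=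
  stmt3_general lam j
end

section
/- Let ε ∈ ℂ be a primitive l-th root of unity with l odd, l > 1. Suppose a₁,...,a_m ∈ ℂ^× and ξ₁,...,ξ_m ∈ {1,...,n} satisfy: for all r ≠ s with ξ_r = ξ_s, a_s/a_r ≠ ε^{±2}. Then the product polynomial π_i(t) := Π_{k : ξ_k = i} (1 - a_k t) is l-acyclic for every i ∈ {1,...,n}, i.e., π_i(t) is not divisible by (1 - c t^l) for any c ∈ ℂ^×. -/
/-!
If `1 - c t^l` divides `π`, then every root `w` of `1 - c t^l` is a root of `π`, and so is `ζ w`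
for any `l`-th root of unity `ζ`. For `π = ∏ (1 - a_k t)` this produces factors with
`a_r w = 1` and `a_s ζ w = 1`, i.e. `a_s / a_r = ζ⁻¹`. Since `l` is odd, `ε²` is again a primitive
`l`-th root of unity, so taking `ζ = ε²` gives `r ≠ s` with `a_s / a_r = ε⁻²`.
-/

open Polynomial

namespace Polynomial

theorem eval_eq_zero_of_one_sub_C_mul_X_pow_dvd {R : Type*} [CommRing R] {p : R[X]} {c w : R}
    {l : ℕ} (hdvd : 1 - C c * X ^ l ∣ p) (hw : c * w ^ l = 1) : p.eval w = 0 := by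
  obtain ⟨q, rfl⟩ := hdvd
  simp [hw]

theorem exists_mul_eq_one_of_eval_prod_one_sub_C_mul_X_eq_zero {R ι : Type*} [CommRing R]
    [IsDomain R] {s : Finset ι} {a : ι → R} {w : R}
    (h : (∏ k ∈ s, (1 - C (a k) * X)).eval w = 0) : ∃ k ∈ s, a k * w = 1 := by
  rw [eval_prod, Finset.prod_eq_zero_iff] at h
  obtain ⟨k, hk, hk0⟩ := h
  simp only [eval_sub, eval_one, eval_mul, eval_C, eval_X] at hk0
  exact ⟨k, hk, (sub_eq_zero.mp hk0).symm⟩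

theorem exists_ne_div_eq_inv_of_one_sub_C_mul_X_pow_dvd_prod {K ι : Type*} [Field K]
    [IsAlgClosed K] {s : Finset ι} {a : ι → K} {c ζ : K} {l : ℕ} (hl : l ≠ 0) (hc : c ≠ 0)
    (hζ : ζ ^ l = 1) (hζ1 : ζ ≠ 1) (hdvd : 1 - C c * X ^ l ∣ ∏ k ∈ s, (1 - C (a k) * X)) :
    ∃ r ∈ s, ∃ t ∈ s, r ≠ t ∧ a t / a r = ζ⁻¹ := by
  obtain ⟨z, hz⟩ := IsAlgClosed.exists_pow_nat_eq c⁻¹ (Nat.pos_of_ne_zero hl)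
  have hroot : ∀ w, w ^ l = c⁻¹ → ∃ k ∈ s, a k * w = 1 := fun w hw =>
    exists_mul_eq_one_of_eval_prod_one_sub_C_mul_X_eq_zero
      (eval_eq_zero_of_one_sub_C_mul_X_pow_dvd hdvd (by rw [hw, mul_inv_cancel₀ hc]))
  obtain ⟨r, hr, har⟩ := hroot z hz
  obtain ⟨t, ht, hat⟩ := hroot (ζ * z) (by rw [mul_pow, hζ, one_mul, hz])
  have hz0 : z ≠ 0 := right_ne_zero_of_mul_eq_one har
  have hatr : a t * ζ = a r := mul_right_cancel₀ hz0 (by linear_combination hat - har)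
  refine ⟨r, hr, t, ht, ?_, ?_⟩
  · rintro rfl
    exact hζ1 (mul_left_cancel₀ (left_ne_zero_of_mul_eq_one har) (hatr.trans (mul_one _).symm))
  · rw [← hatr, div_mul_cancel_left₀ (left_ne_zero_of_mul_eq_one hat)]

end Polynomial

theorem stmt13_general (l : ℕ) (hodd : Odd l) (hl : 1 < l) (ε : ℂ) (hε : IsPrimitiveRoot ε l)
    (m : ℕ) (a : Fin m → ℂ) (ξ : Fin m → ℕ)
    (hcond : ∀ r s : Fin m, r ≠ s → ξ r = ξ s →
      a s / a r ≠ ε ^ 2 ∧ a s / a r ≠ (ε ^ 2)⁻¹) :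
    ∀ i : ℕ, ¬ ∃ c : ℂ, c ≠ 0 ∧
      (1 - C c * X ^ l) ∣
        ∏ k ∈ Finset.univ.filter (fun k => ξ k = i), (1 - C (a k) * X) := by
  rintro i ⟨c, hc, hdvd⟩
  have hε2 : IsPrimitiveRoot (ε ^ 2) l := hε.pow_of_coprime 2 hodd.coprime_two_left
  obtain ⟨r, hr, s, hs, hrs, hratio⟩ := exists_ne_div_eq_inv_of_one_sub_C_mul_X_pow_dvd_prod
    (by omega) hc hε2.pow_eq_one (hε2.ne_one hl) hdvd
  rw [Finset.mem_filter] at hr hs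
  exact (hcond r s hrs (hr.2.trans hs.2.symm)).2 hratio

/-- Let `ε` be a primitive `l`-th root of unity (`l` odd, `l > 1`).  If
`a₁,…,a_m ∈ ℂ^×` and `ξ₁,…,ξ_m ∈ {1,…,n}` satisfy `a_s/a_r ≠ ε^{±2}` whenever
`r ≠ s` and `ξ_r = ξ_s`, then each product `π_i(t) = Π_{k : ξ_k = i} (1 - a_k t)`
is `l`-acyclic, i.e. not divisible by `1 - c t^l` for any `c ∈ ℂ^×`. -/
theorem stmt13 (l : ℕ) (hodd : Odd l) (hl : 1 < l) (ε : ℂ) (hε : IsPrimitiveRoot ε l)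
    (m n : ℕ) (a : Fin m → ℂ) (ha : ∀ k, a k ≠ 0) (ξ : Fin m → ℕ)
    (hξ : ∀ k, 1 ≤ ξ k ∧ ξ k ≤ n)
    (hcond : ∀ r s : Fin m, r ≠ s → ξ r = ξ s →
      a s / a r ≠ ε ^ 2 ∧ a s / a r ≠ (ε ^ 2)⁻¹) :
    ∀ i : ℕ, ¬ ∃ c : ℂ, c ≠ 0 ∧
      (1 - C c * X ^ l) ∣
        ∏ k ∈ Finset.univ.filter (fun k => ξ k = i), (1 - C (a k) * X) :=
  stmt13_general l hodd hl ε hε m a ξ hcond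
end

section
/- For every monic-at-0 polynomial π(t) ∈ ℂ[t] with π(0) = 1 and every integer l ≥ 1, there exist unique polynomials π⁽⁰⁾(t), π⁽¹⁾(t) ∈ ℂ[t] with π⁽⁰⁾(0) = π⁽¹⁾(0) = 1 such that π = π⁽⁰⁾ · π⁽¹⁾, π⁽⁰⁾ is l-acyclic (not divisible by 1 - c t^l for any c ∈ ℂ^×), and π⁽¹⁾(t) = σ(t^l) for some polynomial σ with σ(0) = 1. -/
/-!
A nonconstant `σ` with `σ(0) = 1` has a nonzero root `1/c`, so `1 - c t` divides `σ` and
`1 - c t^l` divides `σ(t^l)`. Existence: split off factors `1 - c t^l` from `π` until the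
remaining factor is `l`-acyclic. Uniqueness: `1 - c t` is irreducible, so if it does not divide `σ`
it is coprime to `σ`, and applying the ring map `t ↦ t^l` makes `1 - c t^l` coprime to `σ(t^l)`.
Hence a factor `1 - c t^l` of `π⁽⁰⁾ σ(t^l)` with `π⁽⁰⁾` acyclic comes from `σ`; cancel it and
induct on `deg σ`.
-/

open Polynomial

section

variable {K : Type*} [Field K]

def IsAcyclic (l : ℕ) (a : K[X]) : Prop :=
  ∀ c : K, c ≠ 0 → ¬ (1 - C c * X ^ l) ∣ a

theorem one_sub_C_mul_X_eq {c : K} (hc : c ≠ 0) :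
    (1 - C c * X : K[X]) = C (-c) * (X - C c⁻¹) := by
  rw [mul_sub, ← C_mul, neg_mul, mul_inv_cancel₀ hc]
  simp only [map_neg, map_one, neg_mul, sub_neg_eq_add]
  ring

theorem one_sub_C_mul_X_dvd_iff {c : K} (hc : c ≠ 0) {σ : K[X]} :
    (1 - C c * X) ∣ σ ↔ σ.IsRoot c⁻¹ := by
  rw [one_sub_C_mul_X_eq hc, C_mul_dvd (neg_ne_zero.mpr hc), dvd_iff_isRoot]

theorem irreducible_one_sub_C_mul_X {c : K} (hc : c ≠ 0) : Irreducible (1 - C c * X : K[X]) :=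
  irreducible_of_degree_eq_one <| by
    rw [one_sub_C_mul_X_eq hc, degree_C_mul (neg_ne_zero.mpr hc), degree_X_sub_C]

theorem ne_zero_of_eval_eq_one {p : K[X]} {x : K} (h : p.eval x = 1) : p ≠ 0 := by
  rintro rfl
  simp at h

theorem exists_one_sub_C_mul_X_dvd [IsAlgClosed K] {σ : K[X]} (h0 : σ.eval 0 = 1)
    (hσ : σ.natDegree ≠ 0) : ∃ c ≠ 0, (1 - C c * X) ∣ σ := by
  obtain ⟨γ, hγ⟩ :=
    IsAlgClosed.exists_root σ (natDegree_pos_iff_degree_pos.mp (Nat.pos_of_ne_zero hσ)).ne'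
  have hγ0 : γ ≠ 0 := by rintro rfl; simp [IsRoot, h0] at hγ
  exact ⟨γ⁻¹, inv_ne_zero hγ0, (one_sub_C_mul_X_dvd_iff (inv_ne_zero hγ0)).mpr (by rwa [inv_inv])⟩

theorem eq_one_or_exists_one_sub_C_mul_X_dvd [IsAlgClosed K] {σ : K[X]} (h0 : σ.eval 0 = 1) :
    σ = 1 ∨ ∃ c ≠ 0, (1 - C c * X) ∣ σ := by
  by_cases hσ : σ.natDegree = 0
  · left
    rw [eq_C_of_natDegree_eq_zero hσ, coeff_zero_eq_eval_zero, h0, map_one]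
  · right
    exact exists_one_sub_C_mul_X_dvd h0 hσ

theorem one_sub_C_mul_X_comp_X_pow (c : K) (l : ℕ) :
    (1 - C c * X).comp (X ^ l) = (1 - C c * X ^ l : K[X]) := by
  simp

theorem one_sub_C_mul_X_pow_dvd_comp {σ : K[X]} {c : K} (h : (1 - C c * X) ∣ σ) (l : ℕ) :
    (1 - C c * X ^ l) ∣ σ.comp (X ^ l) :=
  one_sub_C_mul_X_comp_X_pow c l ▸ map_dvd (compRingHom (X ^ l)) h

theorem eval_zero_comp_X_pow {l : ℕ} (hl : l ≠ 0) (σ : K[X]) :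
    (σ.comp (X ^ l)).eval 0 = σ.eval 0 := by
  simp [eval_comp, hl]

theorem one_sub_C_mul_X_pow_ne_zero {l : ℕ} (hl : l ≠ 0) (c : K) : (1 - C c * X ^ l : K[X]) ≠ 0 :=
  ne_zero_of_eval_eq_one (x := 0) (by simp [hl])

theorem natDegree_one_sub_C_mul_X_pow {l : ℕ} (hl : l ≠ 0) {c : K} (hc : c ≠ 0) :
    (1 - C c * X ^ l : K[X]).natDegree = l := by
  rw [natDegree_sub_eq_right_of_natDegree_lt] <;>
    simp [natDegree_C_mul_X_pow l c hc, Nat.pos_of_ne_zero hl]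

theorem IsAcyclic.one_sub_C_mul_X_dvd {l : ℕ} {a σ : K[X]} (ha : IsAcyclic l a) {c : K}
    (hc : c ≠ 0) (hdvd : (1 - C c * X ^ l) ∣ a * σ.comp (X ^ l)) : (1 - C c * X) ∣ σ := by
  by_contra hσ
  have hcop : IsCoprime (1 - C c * X ^ l) (σ.comp (X ^ l)) := by
    rw [← one_sub_C_mul_X_comp_X_pow]
    exact ((irreducible_one_sub_C_mul_X hc).coprime_iff_not_dvd.mpr hσ).map (compRingHom (X ^ l))
  exact ha c hc (hcop.dvd_of_dvd_mul_right hdvd)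

theorem exists_isAcyclic_mul_comp_X_pow {l : ℕ} (hl : l ≠ 0) {p : K[X]} (hp : p ≠ 0) :
    ∃ a σ : K[X], IsAcyclic l a ∧ σ.eval 0 = 1 ∧ p = a * σ.comp (X ^ l) := by
  induction hn : p.natDegree using Nat.strong_induction_on generalizing p with
  | _ n ih =>
  by_cases ha : IsAcyclic l p
  · exact ⟨p, 1, ha, eval_one, by simp⟩
  obtain ⟨c, hc, q, rfl⟩ : ∃ c ≠ 0, (1 - C c * X ^ l) ∣ p := by simpa [IsAcyclic] using ha
  have hq : q ≠ 0 := right_ne_zero_of_mul hp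
  have hdeg : q.natDegree < n := by
    rw [← hn, natDegree_mul (one_sub_C_mul_X_pow_ne_zero hl c) hq,
      natDegree_one_sub_C_mul_X_pow hl hc]
    omega
  obtain ⟨a, σ, haq, hσ, rfl⟩ := ih _ hdeg hq rfl
  refine ⟨a, (1 - C c * X) * σ, haq, by simp [hσ], ?_⟩
  rw [mul_comp, one_sub_C_mul_X_comp_X_pow]
  ring

theorem IsAcyclic.eq_of_mul_comp_X_pow_eq [IsAlgClosed K] {l : ℕ} (hl : l ≠ 0) {a a' : K[X]}
    (ha : IsAcyclic l a) (ha' : IsAcyclic l a') {σ σ' : K[X]} (hσ : σ.eval 0 = 1)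
    (hσ' : σ'.eval 0 = 1) (h : a * σ.comp (X ^ l) = a' * σ'.comp (X ^ l)) : σ = σ' := by
  induction hn : σ.natDegree using Nat.strong_induction_on generalizing σ σ' with
  | _ n ih =>
  rcases eq_one_or_exists_one_sub_C_mul_X_dvd hσ with rfl | ⟨c, hc, τ, rfl⟩
  · rcases eq_one_or_exists_one_sub_C_mul_X_dvd hσ' with rfl | ⟨c, hc, hdvd⟩
    · rfl
    · refine absurd ?_ (ha c hc)
      rw [one_comp, mul_one] at h
      rw [h]
      exact dvd_mul_of_dvd_right (one_sub_C_mul_X_pow_dvd_comp hdvd l) a'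
  obtain ⟨τ', rfl⟩ : (1 - C c * X) ∣ σ' :=
    ha'.one_sub_C_mul_X_dvd hc (h ▸ dvd_mul_of_dvd_right (one_sub_C_mul_X_pow_dvd_comp
      (dvd_mul_right _ τ) l) a)
  have hτ : τ.eval 0 = 1 := by simpa using hσ
  have hdeg : τ.natDegree < n := by
    have hlin : (1 - C c * X : K[X]).natDegree = 1 := by
      simpa using natDegree_one_sub_C_mul_X_pow one_ne_zero hc
    rw [← hn, natDegree_mul (ne_zero_of_natDegree_gt (hlin ▸ zero_lt_one))
      (ne_zero_of_eval_eq_one hτ), hlin]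
    omega
  rw [ih _ hdeg hτ (by simpa using hσ') ?_ rfl]
  apply mul_left_cancel₀ (one_sub_C_mul_X_pow_ne_zero hl c)
  simp only [mul_comp, one_sub_C_mul_X_comp_X_pow] at h
  linear_combination h

end

/-- For every `π ∈ ℂ[t]` with `π(0) = 1` and every `l ≥ 1`, there is a unique
factorization `π = π⁽⁰⁾ · π⁽¹⁾` with `π⁽⁰⁾(0) = π⁽¹⁾(0) = 1`, `π⁽⁰⁾` `l`-acyclic
(not divisible by `1 - c t^l` for any `c ∈ ℂ^×`), and `π⁽¹⁾(t) = σ(t^l)` for some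
`σ` with `σ(0) = 1`. -/
theorem stmt14 (l : ℕ) (hl : 1 ≤ l) (p : Polynomial ℂ) (hp : p.eval 0 = 1) :
    ∃! pq : Polynomial ℂ × Polynomial ℂ,
      pq.1.eval 0 = 1 ∧ pq.2.eval 0 = 1 ∧ p = pq.1 * pq.2 ∧
      (∀ c : ℂ, c ≠ 0 → ¬ ((1 - C c * X ^ l) ∣ pq.1)) ∧
      (∃ σ : Polynomial ℂ, σ.eval 0 = 1 ∧ pq.2 = σ.comp (X ^ l)) := by
  have hl0 : l ≠ 0 := Nat.one_le_iff_ne_zero.mp hl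
  obtain ⟨a, σ, ha, hσ, rfl⟩ := exists_isAcyclic_mul_comp_X_pow hl0 (ne_zero_of_eval_eq_one hp)
  have hb : (σ.comp (X ^ l)).eval 0 = 1 := by rw [eval_zero_comp_X_pow hl0, hσ]
  have ha0 : a.eval 0 = 1 := by rwa [eval_mul, hb, mul_one] at hp
  refine ⟨(a, σ.comp (X ^ l)), ⟨ha0, hb, rfl, ha, σ, hσ, rfl⟩, ?_⟩
  rintro ⟨a', b'⟩ ⟨-, -, hab, ha', σ', hσ', rfl⟩
  obtain rfl : σ' = σ := IsAcyclic.eq_of_mul_comp_X_pow_eq hl0 ha' ha hσ' hσ hab.symm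
  obtain rfl : a' = a := mul_right_cancel₀ (ne_zero_of_eval_eq_one hb) hab.symm
  rfl
end
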